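/- arXiv:2410.05734 — 8 statements merged into one kernel-verified Lean document; each statement's English description precedes it below -/
import Mathlib

section
/- Let α > 0 and K ≥ 1 be real numbers, and define the diminishing-exploration start times by u(1) = ⌈(α − K/(4α))²⌉ and u(j) = ⌈u(j−1) + (K/α)·√(u(j−1)) + K²/(4α²)⌉ for j ≥ 2. Then for every integer n ≥ 1, u(n) ≥ ((2n−3)·K/(4α) + α)². -/
/-- Lower bound on the diminishing-exploration start times:
`u 1 = ⌈(α − K/(4α))²⌉`, `u j = ⌈u (j−1) + (K/α)√(u (j−1)) + K²/(4α²)⌉` for `j ≥ 2`,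
then for every `n ≥ 1`, `u n ≥ ((2n−3)K/(4α) + α)²`. -/
theorem diminishing_exploration_lower_bound
    (α K : ℝ) (hα : 0 < α) (hK : 1 ≤ K)
    (u : ℕ → ℤ)
    (hu1 : u 1 = ⌈(α - K / (4 * α)) ^ 2⌉)
    (hu : ∀ j : ℕ, 2 ≤ j →
      u j = ⌈(u (j - 1) : ℝ) + (K / α) * Real.sqrt ((u (j - 1) : ℝ)) + K ^ 2 / (4 * α ^ 2)⌉)
    (n : ℕ) (hn : 1 ≤ n) :
    ((2 * (n : ℝ) - 3) * K / (4 * α) + α) ^ 2 ≤ (u n : ℝ) := by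
  induction n, hn using Nat.le_induction with
  | base =>
    rw [hu1]
    have he : ((2 * ((1:ℕ) : ℝ) - 3) * K / (4 * α) + α) ^ 2 = (α - K / (4 * α)) ^ 2 := by
      push_cast; ring
    rw [he]
    exact Int.le_ceil _
  | succ j hj ih =>
    have hrec := hu (j + 1) (by omega)
    simp only [Nat.add_sub_cancel] at hrec
    set c : ℝ := (2 * (j : ℝ) - 3) * K / (4 * α) + α with hc
    clear_value c
    have hsq : c ≤ Real.sqrt (u j : ℝ) := by
      calc c ≤ |c| := le_abs_self c
        _ = Real.sqrt (c ^ 2) := (Real.sqrt_sq_eq_abs c).symm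
        _ ≤ Real.sqrt (u j : ℝ) := Real.sqrt_le_sqrt ih
    have hKα : (0 : ℝ) < K / α := by positivity
    have hexp : (c + K / (2 * α)) ^ 2 = c ^ 2 + (K / α) * c + K ^ 2 / (4 * α ^ 2) := by
      field_simp; ring
    have key : (c + K / (2 * α)) ^ 2
        ≤ (u j : ℝ) + (K / α) * Real.sqrt (u j : ℝ) + K ^ 2 / (4 * α ^ 2) := by
      have h1 : (K / α) * c ≤ (K / α) * Real.sqrt (u j : ℝ) :=
        mul_le_mul_of_nonneg_left hsq hKα.le
      rw [hexp]; linarith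
    have hgoal : ((2 * ((j + 1 : ℕ) : ℝ) - 3) * K / (4 * α) + α) = c + K / (2 * α) := by
      rw [hc]; push_cast; field_simp; ring
    rw [hgoal, hrec]
    exact le_trans key (Int.le_ceil _)
end

section
/- Let α > 0 and K ≥ 1 be real numbers with α² ≥ K/4, and define the diminishing-exploration start times by u(1) = ⌈(α − K/(4α))²⌉ and u(j) = ⌈u(j−1) + (K/α)·√(u(j−1)) + K²/(4α²)⌉ for j ≥ 2. Then for every integer j ≥ 2, u(j) ≥ u(j−1) + K; consequently the exploration blocks of K consecutive time steps starting at the times u(j) are pairwise disjoint. -/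
/-- Non-overlap of exploration blocks: if `α > 0`, `K ≥ 1` and `α² ≥ K/4`, then the
diminishing-exploration start times `u 1 = ⌈(α − K/(4α))²⌉`,
`u j = ⌈u (j−1) + (K/α)√(u (j−1)) + K²/(4α²)⌉` satisfy `u j ≥ u (j−1) + K` for every `j ≥ 2`. -/
theorem diminishing_exploration_blocks_disjoint
    (α K : ℝ) (hα : 0 < α) (hK : 1 ≤ K) (hαK : K / 4 ≤ α ^ 2)
    (u : ℕ → ℤ)
    (hu1 : u 1 = ⌈(α - K / (4 * α)) ^ 2⌉)
    (hu : ∀ j : ℕ, 2 ≤ j →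
      u j = ⌈(u (j - 1) : ℝ) + (K / α) * Real.sqrt ((u (j - 1) : ℝ)) + K ^ 2 / (4 * α ^ 2)⌉)
    (j : ℕ) (hj : 2 ≤ j) :
    (u (j - 1) : ℝ) + K ≤ (u j : ℝ) := by
  have hK0 : (0 : ℝ) ≤ K := by linarith
  have hc : 0 ≤ α - K / (4 * α) := by
    rw [sub_nonneg, div_le_iff₀ (by positivity)]
    nlinarith
  have key : ∀ m : ℕ, 1 ≤ m → (α - K / (4 * α)) ^ 2 ≤ (u m : ℝ) := by
    intro m hm
    induction m with
    | zero => omega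
    | succ n ih =>
      rcases Nat.lt_or_ge n 1 with h | h
      · interval_cases n
        rw [hu1]; exact Int.le_ceil _
      · have h2 : 2 ≤ n + 1 := by omega
        have heq := hu (n + 1) h2
        simp only [Nat.add_sub_cancel] at heq
        rw [heq]
        have h1 : 0 ≤ (K / α) * Real.sqrt ((u n : ℝ)) :=
          mul_nonneg (div_nonneg hK0 hα.le) (Real.sqrt_nonneg _)
        have h2' : (0 : ℝ) ≤ K ^ 2 / (4 * α ^ 2) := by positivity
        calc (α - K / (4 * α)) ^ 2 ≤ (u n : ℝ) := ih h
          _ ≤ (u n : ℝ) + (K / α) * Real.sqrt ((u n : ℝ)) + K ^ 2 / (4 * α ^ 2) := by linarith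
          _ ≤ _ := Int.le_ceil _
  have hj1 : 1 ≤ j - 1 := by omega
  have hprev := key (j - 1) hj1
  have hsqrt : α - K / (4 * α) ≤ Real.sqrt ((u (j - 1) : ℝ)) := by
    rw [show α - K / (4 * α) = Real.sqrt ((α - K / (4 * α)) ^ 2) from (Real.sqrt_sq hc).symm]
    exact Real.sqrt_le_sqrt hprev
  rw [hu j hj]
  have hmul : (K / α) * (α - K / (4 * α)) ≤ (K / α) * Real.sqrt ((u (j - 1) : ℝ)) :=
    mul_le_mul_of_nonneg_left hsqrt (div_nonneg hK0 hα.le)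
  have hval : K - K ^ 2 / (4 * α ^ 2) = (K / α) * (α - K / (4 * α)) := by
    field_simp
  have hstep : (u (j - 1) : ℝ) + K ≤
      (u (j - 1) : ℝ) + (K / α) * Real.sqrt ((u (j - 1) : ℝ)) + K ^ 2 / (4 * α ^ 2) := by
    nlinarith [hmul, hval]
  exact le_trans hstep (Int.le_ceil _)
end

section
/- Let α > 0 and K ≥ 1 be real numbers with α² ≥ K/4, and define the diminishing-exploration start times by u(1) = ⌈(α − K/(4α))²⌉ and u(j) = ⌈u(j−1) + (K/α)·√(u(j−1)) + K²/(4α²)⌉ for j ≥ 2. Then for every integer n ≥ 1, u(n) ≤ (α − K/(4α) + 1 + (n−1)·(K/(2α)+1))² = (α + (2n−3)·K/(4α) + n)². Consequently, the time T_reset = u(n) + K by which each of the K arms has been sampled at least n times in the exploration sessions after a reset satisfies T_reset ≤ (α + (2n−3)·K/(4α) + n)² + K. -/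
/-- Upper bound on the diminishing-exploration start times and on the reset time:
if `α > 0`, `K ≥ 1` and `α² ≥ K/4`, then for every `n ≥ 1`,
`u n ≤ (α − K/(4α) + 1 + (n−1)(K/(2α)+1))² = (α + (2n−3)K/(4α) + n)²`, and consequently
`T_reset = u n + K ≤ (α + (2n−3)K/(4α) + n)² + K`. -/
theorem diminishing_exploration_reset_time_bound
    (α K : ℝ) (hα : 0 < α) (hK : 1 ≤ K) (hαK : K / 4 ≤ α ^ 2)
    (u : ℕ → ℤ)
    (hu1 : u 1 = ⌈(α - K / (4 * α)) ^ 2⌉)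
    (hu : ∀ j : ℕ, 2 ≤ j →
      u j = ⌈(u (j - 1) : ℝ) + (K / α) * Real.sqrt ((u (j - 1) : ℝ)) + K ^ 2 / (4 * α ^ 2)⌉)
    (n : ℕ) (hn : 1 ≤ n) :
    (u n : ℝ) ≤ (α - K / (4 * α) + 1 + ((n : ℝ) - 1) * (K / (2 * α) + 1)) ^ 2
      ∧ (α - K / (4 * α) + 1 + ((n : ℝ) - 1) * (K / (2 * α) + 1)) ^ 2
          = (α + (2 * (n : ℝ) - 3) * K / (4 * α) + n) ^ 2
      ∧ (u n : ℝ) + K ≤ (α + (2 * (n : ℝ) - 3) * K / (4 * α) + n) ^ 2 + K := by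
  have hα' : (0:ℝ) < 4 * α := by linarith
  have hx : 0 ≤ α - K / (4 * α) := by
    have : K / (4 * α) ≤ α := by
      rw [div_le_iff₀ hα']
      nlinarith
    linarith
  have hKα : 0 < K / α := div_pos (by linarith) hα
  have main : ∀ m : ℕ, 1 ≤ m →
      (u m : ℝ) ≤ (α - K / (4 * α) + 1 + ((m : ℝ) - 1) * (K / (2 * α) + 1)) ^ 2 := by
    intro m hm
    induction m, hm using Nat.le_induction with
    | base =>
      have h1 : (u 1 : ℝ) < (α - K / (4 * α)) ^ 2 + 1 := by
        rw [hu1]; exact_mod_cast Int.ceil_lt_add_one _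
      simp only [Nat.cast_one]
      nlinarith
    | succ j hj ih =>
      set B : ℝ := α - K / (4 * α) + 1 + ((j : ℝ) - 1) * (K / (2 * α) + 1) with hB
      clear_value B
      have hBnn : 0 ≤ B := by
        have : (1:ℝ) ≤ (j:ℝ) := by exact_mod_cast hj
        have hd : 0 ≤ K / (2 * α) + 1 := by positivity
        have hm := mul_nonneg (by linarith : (0:ℝ) ≤ (j:ℝ) - 1) hd
        linarith
      have hsqrt : Real.sqrt ((u j : ℝ)) ≤ B := by
        calc Real.sqrt ((u j : ℝ)) ≤ Real.sqrt (B ^ 2) := Real.sqrt_le_sqrt ih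
        _ = B := by rw [Real.sqrt_sq hBnn]
      have hrec := hu (j + 1) (by omega)
      have hj1 : j + 1 - 1 = j := by omega
      rw [hj1] at hrec
      have hceil : (u (j+1) : ℝ) < ((u j : ℝ) + (K / α) * Real.sqrt ((u j : ℝ))
          + K ^ 2 / (4 * α ^ 2)) + 1 := by
        rw [hrec]; exact_mod_cast Int.ceil_lt_add_one _
      have hcast : ((j:ℝ) + 1 - 1) = (j:ℝ) := by ring
      push_cast
      rw [hcast]
      have hd : K / (2 * α) = K / α / 2 := by ring
      have hsq : K ^ 2 / (4 * α ^ 2) = (K / α) ^ 2 / 4 := by ring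
      have key : (u j : ℝ) + (K / α) * Real.sqrt ((u j : ℝ)) + K ^ 2 / (4 * α ^ 2) + 1
          ≤ (B + (K / (2 * α) + 1)) ^ 2 := by
        rw [hd, hsq]
        have hm := mul_le_mul_of_nonneg_left hsqrt (le_of_lt hKα)
        have hexp : (B + (K / α / 2 + 1)) ^ 2
            = B ^ 2 + B * (K / α) + 2 * B + (K / α) ^ 2 / 4 + (K / α) + 1 := by ring
        rw [hexp]
        nlinarith
      have hBeq : α - K / (4 * α) + 1 + (j:ℝ) * (K / (2 * α) + 1)
          = B + (K / (2 * α) + 1) := by rw [hB]; ring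
      rw [hBeq]
      linarith
  have h1 := main n hn
  have h2 : (α - K / (4 * α) + 1 + ((n : ℝ) - 1) * (K / (2 * α) + 1)) ^ 2
      = (α + (2 * (n : ℝ) - 3) * K / (4 * α) + n) ^ 2 := by
    have : α - K / (4 * α) + 1 + ((n : ℝ) - 1) * (K / (2 * α) + 1)
        = α + (2 * (n : ℝ) - 3) * K / (4 * α) + n := by
      field_simp
      ring
    rw [this]
  exact ⟨h1, h2, by rw [← h2]; linarith⟩
end

section
/- Let α > 0 and K ≥ 1 be real numbers, and define the diminishing-exploration start times by u(1) = ⌈(α − K/(4α))²⌉ and u(j) = ⌈u(j−1) + (K/α)·√(u(j−1)) + K²/(4α²)⌉ for j ≥ 2. Then for all integers j ≥ 1 and m ≥ 0, u(j+m) ≤ (√(u(j)) + m·(K/(2α)+1))², and consequently u(j+m) − u(j) ≤ 2m·(K/(2α)+1)·√(u(j)) + m²·(K/(2α)+1)². In particular, if u(j) ≤ t_d + 1 for some real t_d ≥ 0, then u(j+m) − u(j) ≤ 2m·(K/(2α)+1)·√(t_d+1) + m²·(K/(2α)+1)². -/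
/-- Samples-to-time-steps transform (delayed-start part): for all `j ≥ 1` and `m ≥ 0`,
`u (j+m) ≤ (√(u j) + m(K/(2α)+1))²`, hence
`u (j+m) − u j ≤ 2m(K/(2α)+1)√(u j) + m²(K/(2α)+1)²`, and if `u j ≤ t_d + 1` then
`u (j+m) − u j ≤ 2m(K/(2α)+1)√(t_d+1) + m²(K/(2α)+1)²`. -/
theorem diminishing_exploration_delayed_start_bound
    (α K : ℝ) (hα : 0 < α) (hK : 1 ≤ K)
    (u : ℕ → ℤ)
    (hu1 : u 1 = ⌈(α - K / (4 * α)) ^ 2⌉)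
    (hu : ∀ j : ℕ, 2 ≤ j →
      u j = ⌈(u (j - 1) : ℝ) + (K / α) * Real.sqrt ((u (j - 1) : ℝ)) + K ^ 2 / (4 * α ^ 2)⌉)
    (j m : ℕ) (hj : 1 ≤ j) :
    (u (j + m) : ℝ) ≤ (Real.sqrt ((u j : ℝ)) + (m : ℝ) * (K / (2 * α) + 1)) ^ 2
      ∧ (u (j + m) : ℝ) - (u j : ℝ)
          ≤ 2 * (m : ℝ) * (K / (2 * α) + 1) * Real.sqrt ((u j : ℝ))
            + (m : ℝ) ^ 2 * (K / (2 * α) + 1) ^ 2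
      ∧ ∀ td : ℝ, 0 ≤ td → (u j : ℝ) ≤ td + 1 →
          (u (j + m) : ℝ) - (u j : ℝ)
            ≤ 2 * (m : ℝ) * (K / (2 * α) + 1) * Real.sqrt (td + 1)
              + (m : ℝ) ^ 2 * (K / (2 * α) + 1) ^ 2 := by
  have hKα : 0 ≤ K / α := by positivity
  set c : ℝ := K / (2 * α) + 1 with hc
  have hc0 : 0 ≤ c := by positivity
  -- nonnegativity of u n for n ≥ 1
  have hnn : ∀ n : ℕ, 1 ≤ n → (0 : ℝ) ≤ (u n : ℝ) := by
    intro n hn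
    induction n, hn using Nat.le_induction with
    | base =>
      rw [hu1]
      exact_mod_cast Int.ceil_nonneg (by positivity)
    | succ n hn ih =>
      have h2 : u (n + 1) = ⌈(u n : ℝ) + (K / α) * Real.sqrt ((u n : ℝ))
          + K ^ 2 / (4 * α ^ 2)⌉ := by
        have := hu (n + 1) (by omega)
        simpa using this
      rw [h2]
      have hx : (0 : ℝ) ≤ (u n : ℝ) + (K / α) * Real.sqrt ((u n : ℝ))
          + K ^ 2 / (4 * α ^ 2) := by
        have h1 := Real.sqrt_nonneg ((u n : ℝ))
        have h3 : (0:ℝ) ≤ K ^ 2 / (4 * α ^ 2) := by positivity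
        nlinarith [ih]
      exact_mod_cast Int.ceil_nonneg hx
  have huj : (0 : ℝ) ≤ (u j : ℝ) := hnn j hj
  -- main bound by induction on m
  have main : ∀ m : ℕ, (u (j + m) : ℝ)
      ≤ (Real.sqrt ((u j : ℝ)) + (m : ℝ) * c) ^ 2 := by
    intro m
    induction m with
    | zero =>
      simp [Real.sq_sqrt huj]
    | succ m ih =>
      set S : ℝ := Real.sqrt ((u j : ℝ)) + (m : ℝ) * c with hS
      have hS0 : 0 ≤ S := by
        have := Real.sqrt_nonneg ((u j : ℝ))
        have : 0 ≤ (m : ℝ) * c := mul_nonneg (by positivity) hc0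
        positivity
      have hsq : Real.sqrt ((u (j + m) : ℝ)) ≤ S := by
        calc Real.sqrt ((u (j + m) : ℝ)) ≤ Real.sqrt (S ^ 2) :=
              Real.sqrt_le_sqrt ih
          _ = S := by rw [Real.sqrt_sq hS0]
      have hrec : u (j + m + 1) = ⌈(u (j + m) : ℝ)
          + (K / α) * Real.sqrt ((u (j + m) : ℝ)) + K ^ 2 / (4 * α ^ 2)⌉ := by
        have := hu (j + m + 1) (by omega)
        simpa using this
      have hceil : (u (j + m + 1) : ℝ) ≤ (u (j + m) : ℝ)
          + (K / α) * Real.sqrt ((u (j + m) : ℝ)) + K ^ 2 / (4 * α ^ 2) + 1 := by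
        rw [hrec]
        exact le_of_lt (Int.ceil_lt_add_one _)
      have hstep : (u (j + m) : ℝ)
          + (K / α) * Real.sqrt ((u (j + m) : ℝ)) + K ^ 2 / (4 * α ^ 2) + 1
          ≤ (S + c) ^ 2 := by
        have h1 : (K / α) * Real.sqrt ((u (j + m) : ℝ)) ≤ (K / α) * S :=
          mul_le_mul_of_nonneg_left hsq hKα
        have hid : (S + c) ^ 2 = S ^ 2 + (K / α) * S + K ^ 2 / (4 * α ^ 2)
            + 2 * S + K / α + 1 := by
          rw [hc]; field_simp; ring
        have h2 : 0 ≤ 2 * S := by linarith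
        nlinarith [ih]
      have : Real.sqrt ((u j : ℝ)) + ((m : ℝ) + 1) * c = S + c := by
        rw [hS]; ring
      push_cast
      rw [this]
      exact le_trans hceil hstep
  have h1 := main m
  have hexp : (Real.sqrt ((u j : ℝ)) + (m : ℝ) * c) ^ 2
      = (u j : ℝ) + 2 * (m : ℝ) * c * Real.sqrt ((u j : ℝ)) + (m : ℝ) ^ 2 * c ^ 2 := by
    have := Real.sq_sqrt huj
    nlinarith [this]
  refine ⟨h1, by nlinarith, ?_⟩
  intro td htd hujtd
  have hsle : Real.sqrt ((u j : ℝ)) ≤ Real.sqrt (td + 1) := Real.sqrt_le_sqrt hujtd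
  have hcoef : 0 ≤ 2 * (m : ℝ) * c := by positivity
  nlinarith [mul_le_mul_of_nonneg_left hsle hcoef]
end

section
/- Let α > 0 and K ≥ 1 be real numbers with α² ≥ K/4, and define the diminishing-exploration start times by u(1) = ⌈(α − K/(4α))²⌉ and u(j) = ⌈u(j−1) + (K/α)·√(u(j−1)) + K²/(4α²)⌉ for j ≥ 2. If S ≥ 0 is a real number and m ≥ 1 is an integer with u(m) ≤ S, then m·K ≤ 2α·√S − 2α² + (3/2)·K. Consequently the number m of exploration sessions started within S time steps after a reset satisfies m ≤ (2α·√S)/K + 3/2, and the total number of exploration pulls m·K (which upper bounds the exploration regret when rewards lie in [0,1]) satisfies m·K ≤ 2α·√S + (3/2)·K. -/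
/-!
In square-root coordinates the start times grow linearly: the recurrence is
`u j = ⌈(√(u (j-1)) + K/(2α))²⌉`, so `√(u j)` increases by at least `K/(2α)` per session and
`√(u 1) ≥ α - K/(4α)`. Hence `√S ≥ √(u m) ≥ α - K/(4α) + (m-1)·K/(2α)`; multiplying by `2α`
gives `mK ≤ 2α√S - 2α² + 3K/2`, and the two weaker bounds drop the term `-2α²`.
-/

open Real

theorem add_mul_le_sqrt_of_sq_le (v : ℕ → ℝ) (a c : ℝ) (h1 : a ^ 2 ≤ v 1)
    (hstep : ∀ j, 1 ≤ j → (√(v j) + c) ^ 2 ≤ v (j + 1)) :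
    ∀ j : ℕ, 1 ≤ j → a + ((j : ℝ) - 1) * c ≤ √(v j) := by
  intro j hj
  induction j, hj using Nat.le_induction with
  | base => simpa using (le_abs_self a).trans (abs_le_sqrt h1)
  | succ j hj ih =>
    have hsucc : √(v j) + c ≤ √(v (j + 1)) := (le_abs_self _).trans (abs_le_sqrt (hstep j hj))
    push_cast
    linarith

theorem sq_sqrt_add_le_ceil {x : ℝ} (hx : 0 ≤ x) (c : ℝ) :
    (√x + c) ^ 2 ≤ (⌈x + 2 * c * √x + c ^ 2⌉ : ℝ) := by
  have hexpand : (√x + c) ^ 2 = x + 2 * c * √x + c ^ 2 := by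
    rw [add_sq, sq_sqrt hx]
    ring
  exact hexpand ▸ Int.le_ceil _

theorem exploration_start_nonneg {α K : ℝ} (hα : 0 < α) (hK : 0 ≤ K) {u : ℕ → ℤ}
    (hu1 : u 1 = ⌈(α - K / (4 * α)) ^ 2⌉)
    (hu : ∀ j : ℕ, 2 ≤ j →
      u j = ⌈(u (j - 1) : ℝ) + (K / α) * √((u (j - 1) : ℝ)) + K ^ 2 / (4 * α ^ 2)⌉) :
    ∀ j, 1 ≤ j → 0 ≤ u j := by
  intro j hj
  induction j, hj using Nat.le_induction with
  | base => exact hu1 ▸ Int.ceil_nonneg (sq_nonneg _)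
  | succ j _ ih =>
    rw [hu (j + 1) (by omega), Nat.add_sub_cancel]
    have : (0 : ℝ) ≤ u j := by exact_mod_cast ih
    exact Int.ceil_nonneg (by positivity)

theorem sq_sqrt_exploration_start_add_le {α K : ℝ} (hα : 0 < α) (hK : 0 ≤ K) {u : ℕ → ℤ}
    (hu1 : u 1 = ⌈(α - K / (4 * α)) ^ 2⌉)
    (hu : ∀ j : ℕ, 2 ≤ j →
      u j = ⌈(u (j - 1) : ℝ) + (K / α) * √((u (j - 1) : ℝ)) + K ^ 2 / (4 * α ^ 2)⌉)
    (j : ℕ) (hj : 1 ≤ j) :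
    (√(u j : ℝ) + K / (2 * α)) ^ 2 ≤ u (j + 1) := by
  have hcoeffs : ∀ s : ℝ,
      K / α * s + K ^ 2 / (4 * α ^ 2) = 2 * (K / (2 * α)) * s + (K / (2 * α)) ^ 2 := by
    intro s
    field_simp
    ring
  rw [hu (j + 1) (by omega), Nat.add_sub_cancel, add_assoc, hcoeffs, ← add_assoc]
  have hnonneg : (0 : ℝ) ≤ u j := by exact_mod_cast exploration_start_nonneg hα hK hu1 hu j hj
  exact sq_sqrt_add_le_ceil hnonneg _

theorem diminishing_exploration_regret_bound_general
    (α K : ℝ) (hα : 0 < α) (hK : 1 ≤ K)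
    (u : ℕ → ℤ)
    (hu1 : u 1 = ⌈(α - K / (4 * α)) ^ 2⌉)
    (hu : ∀ j : ℕ, 2 ≤ j →
      u j = ⌈(u (j - 1) : ℝ) + (K / α) * Real.sqrt ((u (j - 1) : ℝ)) + K ^ 2 / (4 * α ^ 2)⌉)
    (S : ℝ) (m : ℕ) (hm : 1 ≤ m) (hmS : (u m : ℝ) ≤ S) :
    (m : ℝ) * K ≤ 2 * α * Real.sqrt S - 2 * α ^ 2 + (3 / 2) * K
      ∧ (m : ℝ) ≤ 2 * α * Real.sqrt S / K + 3 / 2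
      ∧ (m : ℝ) * K ≤ 2 * α * Real.sqrt S + (3 / 2) * K := by
  have hKpos : 0 < K := by linarith
  have hsqrt := add_mul_le_sqrt_of_sq_le (fun j ↦ (u j : ℝ)) (α - K / (4 * α)) (K / (2 * α))
    (hu1 ▸ Int.le_ceil _) (sq_sqrt_exploration_start_add_le hα hKpos.le hu1 hu) m hm
  have hscaled : 2 * α * (α - K / (4 * α) + ((m : ℝ) - 1) * (K / (2 * α)))
      = 2 * α ^ 2 - K / 2 + ((m : ℝ) - 1) * K := by
    field_simp
    ring
  have hmain : (m : ℝ) * K ≤ 2 * α * √S - 2 * α ^ 2 + (3 / 2) * K := by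
    have := mul_le_mul_of_nonneg_left (hsqrt.trans (sqrt_le_sqrt hmS)) (by positivity : 0 ≤ 2 * α)
    linarith
  refine ⟨hmain, ?_, by linarith [sq_nonneg α]⟩
  rw [div_add' _ _ _ hKpos.ne', le_div_iff₀ hKpos]
  linarith [sq_nonneg α]

/-- Deterministic core of the diminishing-exploration regret lemma: if `α > 0`, `K ≥ 1`,
`α² ≥ K/4`, `S ≥ 0`, `m ≥ 1` and `u m ≤ S`, then `mK ≤ 2α√S − 2α² + (3/2)K`, hence
`m ≤ 2α√S/K + 3/2` and `mK ≤ 2α√S + (3/2)K`. -/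
theorem diminishing_exploration_regret_bound
    (α K : ℝ) (hα : 0 < α) (hK : 1 ≤ K) (hαK : K / 4 ≤ α ^ 2)
    (u : ℕ → ℤ)
    (hu1 : u 1 = ⌈(α - K / (4 * α)) ^ 2⌉)
    (hu : ∀ j : ℕ, 2 ≤ j →
      u j = ⌈(u (j - 1) : ℝ) + (K / α) * Real.sqrt ((u (j - 1) : ℝ)) + K ^ 2 / (4 * α ^ 2)⌉)
    (S : ℝ) (hS : 0 ≤ S) (m : ℕ) (hm : 1 ≤ m) (hmS : (u m : ℝ) ≤ S) :
    (m : ℝ) * K ≤ 2 * α * Real.sqrt S - 2 * α ^ 2 + (3 / 2) * K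
      ∧ (m : ℝ) ≤ 2 * α * Real.sqrt S / K + 3 / 2
      ∧ (m : ℝ) * K ≤ 2 * α * Real.sqrt S + (3 / 2) * K :=
  diminishing_exploration_regret_bound_general α K hα hK u hu1 hu S m hm hmS
end

section
/- Let w ≥ 2 be an even integer, μ, μ′ ∈ [0,1], and let X₁, …, X_w be independent random variables taking values in [0,1] such that X₁, …, X_{w/2} each have mean μ and X_{w/2+1}, …, X_w each have mean μ′. Define the detector statistic S = Σ_{ℓ=w/2+1}^{w} X_ℓ − Σ_{ℓ=1}^{w/2} X_ℓ and set δ̃ = |μ′ − μ|. Then for every real b with 0 ≤ b ≤ (w/2)·δ̃, P(|S| > b) ≥ 1 − 2·exp(−((w/2)·δ̃ − b)²/w). -/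
/-!
Write the statistic as `S = ∑ ℓ, ε ℓ * X ℓ` with `ε ℓ = -1` on the first half of the window and
`ε ℓ = 1` on the second. The summands are independent, each ranges over an interval of length one,
and `E[S] = (w/2)(μ' - μ)`. Hoeffding's inequality gives `P(|S - E[S]| ≥ t) ≤ 2 exp(-2t²/w)`, and
`|S| ≤ b` forces `|S - E[S]| ≥ (w/2)|μ' - μ| - b`.
-/

open MeasureTheory ProbabilityTheory

theorem mul_mem_uIcc_zero {x : ℝ} (ε : ℝ) (hx : x ∈ Set.Icc 0 1) : ε * x ∈ Set.uIcc 0 ε := by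
  rw [← segment_eq_uIcc]
  exact ⟨1 - x, x, by linarith [hx.2], hx.1, by ring, by simp [mul_comm]⟩

section Hoeffding

variable {Ω ι : Type*} [MeasurableSpace Ω] {P : Measure Ω} [IsProbabilityMeasure P]
  {s : Finset ι} {Y : ι → Ω → ℝ} {a b : ι → ℝ} {t : ℝ}

theorem measureReal_sum_sub_integral_ge_le_of_mem_Icc
    (hindep : iIndepFun (fun i : s ↦ Y i) P) (hmeas : ∀ i ∈ s, AEMeasurable (Y i) P)
    (hY : ∀ i ∈ s, ∀ᵐ ω ∂P, Y i ω ∈ Set.Icc (a i) (b i)) (ht : 0 ≤ t) :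
    P.real {ω | t ≤ ∑ i ∈ s, (Y i ω - P[Y i])}
      ≤ Real.exp (-2 * t ^ 2 / ∑ i ∈ s, (b i - a i) ^ 2) := by
  have hcentered : iIndepFun (fun (i : s) ω ↦ Y i ω - P[Y i]) P :=
    hindep.comp (fun i x ↦ x - ∫ ω, Y i ω ∂P) fun _ ↦ measurable_id.sub_const _
  have hoeffding := HasSubgaussianMGF.measure_sum_ge_le_of_iIndepFun hcentered
    (s := Finset.univ) (fun i _ ↦ hasSubgaussianMGF_of_mem_Icc (hmeas i i.2) (hY i i.2)) ht
  have hparam : 2 * ((∑ i : s, (‖b i - a i‖₊ / 2) ^ 2 : NNReal) : ℝ)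
      = (∑ i ∈ s, (b i - a i) ^ 2) / 2 := by
    push_cast
    rw [Finset.sum_coe_sort s (fun i ↦ (‖b i - a i‖ / 2) ^ 2), Finset.mul_sum, Finset.sum_div]
    simp only [Real.norm_eq_abs, div_pow, sq_abs]
    congr 1 with i
    ring
  rw [hparam] at hoeffding
  refine (le_of_eq ?_).trans (hoeffding.trans_eq ?_)
  · congr with ω
    rw [Finset.univ_eq_attach, Finset.sum_attach s (fun i ↦ Y i ω - P[Y i])]
  · congr 1
    ring

theorem measureReal_abs_sum_sub_integral_ge_le_of_mem_Icc
    (hindep : iIndepFun (fun i : s ↦ Y i) P) (hmeas : ∀ i ∈ s, AEMeasurable (Y i) P)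
    (hY : ∀ i ∈ s, ∀ᵐ ω ∂P, Y i ω ∈ Set.Icc (a i) (b i)) (ht : 0 ≤ t) :
    P.real {ω | t ≤ |∑ i ∈ s, (Y i ω - P[Y i])|}
      ≤ 2 * Real.exp (-2 * t ^ 2 / ∑ i ∈ s, (b i - a i) ^ 2) := by
  have hupper := measureReal_sum_sub_integral_ge_le_of_mem_Icc hindep hmeas hY ht
  have hlower := measureReal_sum_sub_integral_ge_le_of_mem_Icc (Y := fun i ↦ -Y i)
    (a := fun i ↦ -b i) (b := fun i ↦ -a i) (hindep.comp (fun _ x ↦ -x) fun _ ↦ measurable_neg)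
    (fun i hi ↦ (hmeas i hi).neg)
    (fun i hi ↦ (hY i hi).mono fun ω hω ↦ ⟨neg_le_neg hω.2, neg_le_neg hω.1⟩) ht
  simp only [Pi.neg_apply, integral_neg, sub_neg_eq_add, neg_add_eq_sub] at hlower
  calc P.real {ω | t ≤ |∑ i ∈ s, (Y i ω - P[Y i])|}
      ≤ P.real ({ω | t ≤ ∑ i ∈ s, (Y i ω - P[Y i])}
          ∪ {ω | t ≤ ∑ i ∈ s, (P[Y i] - Y i ω)}) := by
        refine measureReal_mono fun ω (hω : t ≤ |_|) ↦ ?_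
        rcases le_abs.mp hω with h | h
        · exact Or.inl h
        · exact Or.inr (show t ≤ _ by simpa only [← Finset.sum_neg_distrib, neg_sub] using h)
    _ ≤ _ := measureReal_union_le _ _
    _ ≤ _ := by linarith

theorem measureReal_abs_sum_mul_sub_integral_ge_le_of_mem_Icc_zero_one (c : ι → ℝ)
    (hindep : iIndepFun (fun i : s ↦ Y i) P) (hmeas : ∀ i ∈ s, AEMeasurable (Y i) P)
    (hY : ∀ i ∈ s, ∀ᵐ ω ∂P, Y i ω ∈ Set.Icc 0 1) (ht : 0 ≤ t) :
    P.real {ω | t ≤ |∑ i ∈ s, (c i * Y i ω - ∫ ω', c i * Y i ω' ∂P)|}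
      ≤ 2 * Real.exp (-2 * t ^ 2 / ∑ i ∈ s, c i ^ 2) := by
  have h := measureReal_abs_sum_sub_integral_ge_le_of_mem_Icc (Y := fun i ω ↦ c i * Y i ω)
    (a := fun i ↦ min 0 (c i)) (b := fun i ↦ max 0 (c i))
    (hindep.comp (fun i x ↦ c i * x) fun _ ↦ measurable_const_mul _)
    (fun i hi ↦ (hmeas i hi).const_mul _)
    (fun i hi ↦ (hY i hi).mono fun ω hω ↦ mul_mem_uIcc_zero _ hω) ht
  simpa only [max_sub_min_eq_abs, sq_abs, sub_zero] using h

end Hoeffding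

theorem ofReal_one_sub_le_of_measureReal_compl_le {Ω : Type*} [MeasurableSpace Ω]
    {P : Measure Ω} [IsProbabilityMeasure P] {A : Set Ω} {r : ℝ} (h : P.real Aᶜ ≤ r) :
    ENNReal.ofReal (1 - r) ≤ P A := by
  refine ENNReal.ofReal_le_of_le_toReal ?_
  have : 1 ≤ P.real A + P.real Aᶜ := by
    simpa [Set.union_compl_self] using measureReal_union_le (μ := P) A Aᶜ
  rw [← measureReal_def]
  linarith

theorem sub_le_abs_sub_of_abs_le {x m b : ℝ} (h : |x| ≤ b) : |m| - b ≤ |x - m| := by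
  linarith [abs_sub_abs_le_abs_sub m x, abs_sub_comm m x]

/-- The sign with which `X ℓ` enters the statistic of a window whose first half is `1, …, n`. -/
def windowSign (n ℓ : ℕ) : ℝ := if ℓ ≤ n then -1 else 1

theorem windowSign_sq (n ℓ : ℕ) : windowSign n ℓ ^ 2 = 1 := by
  unfold windowSign; split_ifs <;> norm_num

theorem sum_Icc_succ_sub_sum_Icc_eq_sum_windowSign_mul {n m : ℕ} (h : n ≤ m) (f : ℕ → ℝ) :
    ∑ ℓ ∈ Finset.Icc (n + 1) m, f ℓ - ∑ ℓ ∈ Finset.Icc 1 n, f ℓ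
      = ∑ ℓ ∈ Finset.Icc 1 m, windowSign n ℓ * f ℓ := by
  have hIcc (k : ℕ) : Finset.Icc 1 k = Finset.Ioc 0 k := Finset.Icc_add_one_left_eq_Ioc 0 k
  rw [hIcc, hIcc, Finset.Icc_add_one_left_eq_Ioc, ← Finset.sum_Ioc_consecutive _ n.zero_le h,
    sub_eq_neg_add, ← Finset.sum_neg_distrib]
  congr 1 <;> refine Finset.sum_congr rfl fun ℓ hℓ ↦ ?_ <;> rw [Finset.mem_Ioc] at hℓ
  · simp [windowSign, hℓ.2]
  · simp [windowSign, hℓ.1.not_ge]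

theorem sum_windowSign_mul_eq_of_eqOn_halves {n : ℕ} {f : ℕ → ℝ} {μ μ' : ℝ}
    (h₁ : ∀ i ∈ Finset.Icc 1 n, f i = μ) (h₂ : ∀ i ∈ Finset.Icc (n + 1) (n + n), f i = μ') :
    ∑ ℓ ∈ Finset.Icc 1 (n + n), windowSign n ℓ * f ℓ = n * (μ' - μ) := by
  rw [← sum_Icc_succ_sub_sum_Icc_eq_sum_windowSign_mul (by omega), Finset.sum_congr rfl h₁,
    Finset.sum_congr rfl h₂]
  simp only [Finset.sum_const, Nat.card_Icc, Nat.reduceSubDiff, add_tsub_cancel_right,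
    nsmul_eq_mul]
  ring

theorem mucb_statistic_detection_lower_bound_general
    {Ω : Type*} [MeasurableSpace Ω] (P : Measure Ω) [IsProbabilityMeasure P]
    (w : ℕ) (hweven : Even w)
    (μ μ' : ℝ)
    (X : ℕ → Ω → ℝ)
    (hmeas : ∀ i ∈ Finset.Icc 1 w, Measurable (X i))
    (hrange : ∀ i ∈ Finset.Icc 1 w, ∀ᵐ ω ∂P, X i ω ∈ Set.Icc (0 : ℝ) 1)
    (hmean1 : ∀ i ∈ Finset.Icc 1 (w / 2), ∫ ω, X i ω ∂P = μ)
    (hmean2 : ∀ i ∈ Finset.Icc (w / 2 + 1) w, ∫ ω, X i ω ∂P = μ')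
    (hindep : iIndepFun
      (fun i : {x // x ∈ Finset.Icc 1 w} => X i.1) P)
    (b : ℝ) (hb : b ≤ ((w : ℝ) / 2) * |μ' - μ|) :
    ENNReal.ofReal (1 - 2 * Real.exp (-(((w : ℝ) / 2) * |μ' - μ| - b) ^ 2 / w))
      ≤ P {ω | b < |(∑ ℓ ∈ Finset.Icc (w / 2 + 1) w, X ℓ ω)
          - ∑ ℓ ∈ Finset.Icc 1 (w / 2), X ℓ ω|} := by
  obtain ⟨n, rfl⟩ := hweven
  rw [show (n + n) / 2 = n by omega] at hmean1 hmean2 ⊢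
  rw [show ((n + n : ℕ) : ℝ) / 2 = n by push_cast; ring] at hb ⊢
  have hstatistic (ω : Ω) : ∑ ℓ ∈ Finset.Icc (n + 1) (n + n), X ℓ ω - ∑ ℓ ∈ Finset.Icc 1 n, X ℓ ω
      = ∑ ℓ ∈ Finset.Icc 1 (n + n), windowSign n ℓ * X ℓ ω :=
    sum_Icc_succ_sub_sum_Icc_eq_sum_windowSign_mul (by omega) _
  have hmean : ∑ ℓ ∈ Finset.Icc 1 (n + n), ∫ ω, windowSign n ℓ * X ℓ ω ∂P = n * (μ' - μ) := by
    simpa only [integral_const_mul] using sum_windowSign_mul_eq_of_eqOn_halves hmean1 hmean2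
  have hoeffding := measureReal_abs_sum_mul_sub_integral_ge_le_of_mem_Icc_zero_one (windowSign n)
    hindep (fun ℓ hℓ ↦ (hmeas ℓ hℓ).aemeasurable) hrange (sub_nonneg.2 hb)
  simp only [windowSign_sq, Finset.sum_const, Nat.card_Icc, Nat.add_sub_cancel, nsmul_one]
    at hoeffding
  apply ofReal_one_sub_le_of_measureReal_compl_le
  calc P.real {ω | b < |∑ ℓ ∈ Finset.Icc (n + 1) (n + n), X ℓ ω - ∑ ℓ ∈ Finset.Icc 1 n, X ℓ ω|}ᶜ
      ≤ P.real {ω | n * |μ' - μ| - b ≤ |∑ ℓ ∈ Finset.Icc 1 (n + n),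
          (windowSign n ℓ * X ℓ ω - ∫ ω', windowSign n ℓ * X ℓ ω' ∂P)|} := by
        refine measureReal_mono fun ω hω ↦ ?_
        have hshift : |(n : ℝ) * (μ' - μ)| = n * |μ' - μ| := by rw [abs_mul, Nat.abs_cast]
        rw [Set.mem_ofPred_eq, Finset.sum_sub_distrib, hmean, ← hshift]
        refine sub_le_abs_sub_of_abs_le ?_
        simpa only [hstatistic, Set.mem_compl_iff, Set.mem_ofPred_eq, not_lt] using hω
    _ ≤ _ := hoeffding
    _ ≤ _ := by
        gcongr 2 * Real.exp ?_
        exact div_le_div_of_nonneg_right (by linarith [sq_nonneg (n * |μ' - μ| - b)])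
          (Nat.cast_nonneg _)

/-- Detection-probability lower bound for the M-UCB detector statistic with a change in the
middle of the window: if the first half of the window has mean `μ` and the second half has
mean `μ′`, `δ̃ = |μ′ − μ|`, and `0 ≤ b ≤ (w/2)·δ̃`, then
`P(|S| > b) ≥ 1 − 2·exp(−((w/2)·δ̃ − b)²/w)`. -/
theorem mucb_statistic_detection_lower_bound
    {Ω : Type*} [MeasurableSpace Ω] (P : Measure Ω) [IsProbabilityMeasure P]
    (w : ℕ) (hw : 2 ≤ w) (hweven : Even w)
    (μ μ' : ℝ) (hμ : μ ∈ Set.Icc (0 : ℝ) 1) (hμ' : μ' ∈ Set.Icc (0 : ℝ) 1)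
    (X : ℕ → Ω → ℝ)
    (hmeas : ∀ i ∈ Finset.Icc 1 w, Measurable (X i))
    (hrange : ∀ i ∈ Finset.Icc 1 w, ∀ᵐ ω ∂P, X i ω ∈ Set.Icc (0 : ℝ) 1)
    (hmean1 : ∀ i ∈ Finset.Icc 1 (w / 2), ∫ ω, X i ω ∂P = μ)
    (hmean2 : ∀ i ∈ Finset.Icc (w / 2 + 1) w, ∫ ω, X i ω ∂P = μ')
    (hindep : iIndepFun
      (fun i : {x // x ∈ Finset.Icc 1 w} => X i.1) P)
    (b : ℝ) (hb0 : 0 ≤ b) (hb : b ≤ ((w : ℝ) / 2) * |μ' - μ|) :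
    ENNReal.ofReal (1 - 2 * Real.exp (-(((w : ℝ) / 2) * |μ' - μ| - b) ^ 2 / w))
      ≤ P {ω | b < |(∑ ℓ ∈ Finset.Icc (w / 2 + 1) w, X ℓ ω)
          - ∑ ℓ ∈ Finset.Icc 1 (w / 2), X ℓ ω|} :=
  mucb_statistic_detection_lower_bound_general P w hweven μ μ' X hmeas hrange hmean1 hmean2 hindep b
    hb
end

section
/- Let K and T be positive integers, δ ∈ (0,1], and let w ≥ (4/δ²)·(√(log(2KT²)) + √(log(2T)))² be an even integer, with threshold b = √((w/2)·log(2KT²)). Let μ, μ′ ∈ [0,1] with |μ′ − μ| ≥ δ, and let X₁, …, X_w be independent random variables taking values in [0,1] such that X₁, …, X_{w/2} each have mean μ and X_{w/2+1}, …, X_w each have mean μ′. Define S = Σ_{ℓ=w/2+1}^{w} X_ℓ − Σ_{ℓ=1}^{w/2} X_ℓ. Then P(|S| > b) ≥ 1 − 1/T. -/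
/-!
After centering, the detector statistic is a `±1`-weighted sum of `w` independent `[0, 1]`-valued
variables, so by Hoeffding's lemma it is sub-Gaussian with variance proxy `w / 4`. Its mean
`(w / 2)(μ' - μ)` has size at least `wδ / 2`, so the detector can only stay silent if the
centered statistic deviates by at least `ε = wδ / 2 - b`. The choice of `w` gives
`ε ≥ √(w log (2T))`, and the two-sided Chernoff bound `2 exp (-2ε² / w) ≤ 1 / (2T²)` finishes
the proof.
-/

open MeasureTheory ProbabilityTheory Real Finset
open scoped NNReal

section

variable {Ω : Type*} {m : MeasurableSpace Ω} {μ : Measure Ω}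

lemma ofReal_one_sub_le_measure [IsProbabilityMeasure μ] {s : Set Ω}
    (hs : NullMeasurableSet s μ) {r : ℝ} (h : μ.real sᶜ ≤ r) : ENNReal.ofReal (1 - r) ≤ μ s := by
  rw [← ofReal_measureReal]
  gcongr
  linarith [probReal_compl_eq_one_sub₀ hs]

lemma ProbabilityTheory.HasSubgaussianMGF.measureReal_abs_ge_le [IsFiniteMeasure μ]
    {X : Ω → ℝ} {c : ℝ≥0} (h : HasSubgaussianMGF X c μ) {ε : ℝ} (hε : 0 ≤ ε) :
    μ.real {ω | ε ≤ |X ω|} ≤ 2 * exp (-ε ^ 2 / (2 * c)) := by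
  have hsub : {ω | ε ≤ |X ω|} ⊆ {ω | ε ≤ X ω} ∪ {ω | ε ≤ -X ω} := fun ω hω ↦ by
    simpa [le_abs, or_comm] using hω
  calc μ.real {ω | ε ≤ |X ω|}
      ≤ μ.real {ω | ε ≤ X ω} + μ.real {ω | ε ≤ -X ω} :=
        (measureReal_mono hsub).trans (measureReal_union_le _ _)
    _ ≤ 2 * exp (-ε ^ 2 / (2 * c)) := by
        have h_neg := h.neg.measure_ge_le hε
        simp only [Pi.neg_apply] at h_neg
        linarith [h.measure_ge_le hε]

lemma ProbabilityTheory.hasSubgaussianMGF_sum_mul_sub_integral [IsProbabilityMeasure μ]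
    {ι : Type*} {X : ι → Ω → ℝ} (h_indep : iIndepFun X μ) (h_meas : ∀ i, AEMeasurable (X i) μ)
    {a b : ℝ} (h_mem : ∀ i, ∀ᵐ ω ∂μ, X i ω ∈ Set.Icc a b) (e : ι → ℝ) (s : Finset ι) :
    HasSubgaussianMGF (fun ω ↦ ∑ i ∈ s, e i * (X i ω - μ[X i]))
      (∑ i ∈ s, ‖e i‖₊ ^ 2 * (‖b - a‖₊ / 2) ^ 2) μ := by
  refine HasSubgaussianMGF.sum_of_iIndepFun ?_ fun i _ ↦ ?_
  · exact h_indep.comp (fun i x ↦ e i * (x - μ[X i])) fun i ↦ by fun_prop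
  convert (hasSubgaussianMGF_of_mem_Icc (h_meas i) (h_mem i)).const_mul (e i) using 2
  ext
  simp only [NNReal.coe_mul, NNReal.coe_pow, coe_nnnorm, Real.norm_eq_abs, sq_abs]
  rfl

end

lemma sqrt_mul_sqrt_le_sub_sqrt {w δ L₁ L₂ : ℝ} (hw : 0 ≤ w) (hδ : 0 < δ)
    (h : 4 / δ ^ 2 * (√L₁ + √L₂) ^ 2 ≤ w) :
    √w * √L₂ ≤ w / 2 * δ - √(w / 2 * L₁) := by
  have hb : √(w / 2 * L₁) ≤ √w * √L₁ := by
    rw [Real.sqrt_mul (by positivity)]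
    gcongr
    linarith
  have hsum : √L₁ + √L₂ ≤ √w * δ / 2 := by
    refine (sq_le_sq₀ (by positivity) (by positivity)).mp ?_
    rw [div_mul_eq_mul_div, div_le_iff₀ (by positivity)] at h
    nlinarith [Real.sq_sqrt hw]
  nlinarith [Real.mul_self_sqrt hw, Real.sqrt_nonneg w, Real.sqrt_nonneg L₁]

lemma two_mul_exp_neg_sq_div_le_one_div {T w ε : ℝ} (hT : 1 ≤ T) (hw : 0 < w)
    (hε : √w * √(log (2 * T)) ≤ ε) : 2 * exp (-ε ^ 2 / (2 * (w / 4))) ≤ 1 / T := by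
  have hlog : 0 < log (2 * T) := log_pos (by linarith)
  have hexponent : 2 * log (2 * T) ≤ ε ^ 2 / (2 * (w / 4)) := by
    have hsq := pow_le_pow_left₀ (by positivity) hε 2
    rw [mul_pow, sq_sqrt hw.le, sq_sqrt hlog.le] at hsq
    rw [le_div_iff₀ (by positivity)]
    nlinarith
  have hexp : exp (-(2 * log (2 * T))) = 1 / (2 * T) ^ 2 := by
    rw [exp_neg, show 2 * log (2 * T) = log ((2 * T) ^ 2) by rw [log_pow]; norm_num,
      exp_log (by positivity), one_div]
  calc 2 * exp (-ε ^ 2 / (2 * (w / 4))) ≤ 2 * exp (-(2 * log (2 * T))) := by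
        rw [neg_div]; gcongr
    _ = 1 / T * (1 / (2 * T)) := by rw [hexp]; field_simp
    _ ≤ 1 / T := by
        refine mul_le_of_le_one_right (by positivity) ?_
        rw [div_le_one (by positivity)]; linarith

def windowStatistic (x : ℕ → ℝ) (w : ℕ) : ℝ :=
  ∑ ℓ ∈ Icc (w / 2 + 1) w, x ℓ - ∑ ℓ ∈ Icc 1 (w / 2), x ℓ

lemma windowStatistic_eq_sum_Icc (x : ℕ → ℝ) (w : ℕ) :
    windowStatistic x w = ∑ i ∈ Icc 1 w, (if i ≤ w / 2 then -1 else 1) * x i := by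
  simp only [ite_mul, neg_one_mul, one_mul, Finset.sum_ite, Finset.sum_neg_distrib]
  have h₁ : {i ∈ Icc 1 w | i ≤ w / 2} = Icc 1 (w / 2) := by ext; simp; omega
  have h₂ : {i ∈ Icc 1 w | ¬ i ≤ w / 2} = Icc (w / 2 + 1) w := by ext; simp; omega
  rw [h₁, h₂, windowStatistic]; ring

lemma windowStatistic_sub (x y : ℕ → ℝ) (w : ℕ) :
    windowStatistic (fun ℓ ↦ x ℓ - y ℓ) w = windowStatistic x w - windowStatistic y w := by
  simp only [windowStatistic, Finset.sum_sub_distrib]; ring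

lemma windowStatistic_of_even {w : ℕ} (hw : Even w) {x : ℕ → ℝ} {μ μ' : ℝ}
    (h₁ : ∀ i ∈ Icc 1 (w / 2), x i = μ) (h₂ : ∀ i ∈ Icc (w / 2 + 1) w, x i = μ') :
    windowStatistic x w = w / 2 * (μ' - μ) := by
  obtain ⟨k, rfl⟩ := hw
  rw [windowStatistic, Finset.sum_congr rfl h₁, Finset.sum_congr rfl h₂]
  simp only [sum_const, Nat.card_Icc, nsmul_eq_mul]
  rw [show k + k + 1 - ((k + k) / 2 + 1) = k by omega, show (k + k) / 2 + 1 - 1 = k by omega]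
  push_cast; ring

lemma sub_le_abs_windowStatistic_sub {x y : ℕ → ℝ} {w : ℕ} {b δ μ μ' : ℝ}
    (hy : windowStatistic y w = w / 2 * (μ' - μ)) (hgap : δ ≤ |μ' - μ|)
    (hx : |windowStatistic x w| ≤ b) :
    w / 2 * δ - b ≤ |windowStatistic (fun ℓ ↦ x ℓ - y ℓ) w| := by
  have hmean : w / 2 * δ ≤ |windowStatistic y w| := by
    rw [hy, abs_mul, abs_of_nonneg (by positivity)]
    gcongr
  rw [windowStatistic_sub, abs_sub_comm]
  linarith [abs_sub_abs_le_abs_sub (windowStatistic y w) (windowStatistic x w)]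

lemma hasSubgaussianMGF_windowStatistic {Ω : Type*} {m : MeasurableSpace Ω} {P : Measure Ω}
    [IsProbabilityMeasure P] {X : ℕ → Ω → ℝ} {w : ℕ}
    (hindep : iIndepFun (fun i : {x // x ∈ Icc 1 w} ↦ X i.1) P)
    (hmeas : ∀ i ∈ Icc 1 w, AEMeasurable (X i) P) {a b : ℝ}
    (hrange : ∀ i ∈ Icc 1 w, ∀ᵐ ω ∂P, X i ω ∈ Set.Icc a b) :
    HasSubgaussianMGF (fun ω ↦ windowStatistic (fun ℓ ↦ X ℓ ω - P[X ℓ]) w)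
      (w * (‖b - a‖₊ / 2) ^ 2) P := by
  have h := hasSubgaussianMGF_sum_mul_sub_integral hindep (fun i ↦ hmeas i.1 i.2)
    (fun i ↦ hrange i.1 i.2) (fun i ↦ if i.1 ≤ w / 2 then -1 else 1) univ
  have hsign (i : {x // x ∈ Icc 1 w}) : ‖(if i.1 ≤ w / 2 then -1 else 1 : ℝ)‖₊ = 1 := by
    split_ifs <;> simp
  simp only [hsign, sum_const, card_univ, Fintype.card_coe, Nat.card_Icc,
    Nat.add_sub_cancel, nsmul_eq_mul, one_pow, one_mul] at h
  refine h.congr (ae_of_all _ fun ω ↦ ?_)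
  simp only [windowStatistic_eq_sum_Icc, ← Finset.sum_coe_sort (Icc 1 w)]

theorem mucb_successful_detection_general
    {Ω : Type*} [MeasurableSpace Ω] (P : Measure Ω) [IsProbabilityMeasure P]
    (K T : ℕ) (hT : 0 < T)
    (δ : ℝ) (hδ : δ ∈ Set.Ioc (0 : ℝ) 1)
    (w : ℕ) (hweven : Even w)
    (hwlarge : (4 / δ ^ 2) *
      (Real.sqrt (Real.log (2 * K * T ^ 2)) + Real.sqrt (Real.log (2 * T))) ^ 2 ≤ (w : ℝ))
    (b : ℝ) (hb : b = Real.sqrt (((w : ℝ) / 2) * Real.log (2 * K * T ^ 2)))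
    (μ μ' : ℝ)
    (hgap : δ ≤ |μ' - μ|)
    (X : ℕ → Ω → ℝ)
    (hmeas : ∀ i ∈ Finset.Icc 1 w, Measurable (X i))
    (hrange : ∀ i ∈ Finset.Icc 1 w, ∀ᵐ ω ∂P, X i ω ∈ Set.Icc (0 : ℝ) 1)
    (hmean1 : ∀ i ∈ Finset.Icc 1 (w / 2), ∫ ω, X i ω ∂P = μ)
    (hmean2 : ∀ i ∈ Finset.Icc (w / 2 + 1) w, ∫ ω, X i ω ∂P = μ')
    (hindep : iIndepFun
      (fun i : {x // x ∈ Finset.Icc 1 w} => X i.1) P) :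
    ENNReal.ofReal (1 - 1 / (T : ℝ))
      ≤ P {ω | b < |(∑ ℓ ∈ Finset.Icc (w / 2 + 1) w, X ℓ ω)
          - ∑ ℓ ∈ Finset.Icc 1 (w / 2), X ℓ ω|} := by
  change _ ≤ P {ω | b < |windowStatistic (fun ℓ ↦ X ℓ ω) w|}
  have hT1 : (1 : ℝ) ≤ T := by exact_mod_cast hT
  have hw : 0 < (w : ℝ) := hwlarge.trans_lt' <| by
    have := hδ.1
    have := sqrt_pos.mpr (log_pos (by linarith : (1 : ℝ) < 2 * T))
    positivity
  have hε : √w * √(log (2 * T)) ≤ w / 2 * δ - b :=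
    hb ▸ sqrt_mul_sqrt_le_sub_sqrt hw.le hδ.1 hwlarge
  have hsub : {ω | b < |windowStatistic (fun ℓ ↦ X ℓ ω) w|}ᶜ
      ⊆ {ω | w / 2 * δ - b ≤ |windowStatistic (fun ℓ ↦ X ℓ ω - P[X ℓ]) w|} := fun ω hω ↦
    sub_le_abs_windowStatistic_sub (windowStatistic_of_even hweven hmean1 hmean2) hgap
      (not_lt.mp hω)
  have hS : Measurable fun ω ↦ windowStatistic (fun ℓ ↦ X ℓ ω) w := by
    simp only [windowStatistic_eq_sum_Icc]
    exact Finset.measurable_sum _ fun i hi ↦ (hmeas i hi).const_mul _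
  have hproxy : ((w * (‖(1 : ℝ) - 0‖₊ / 2) ^ 2 : ℝ≥0) : ℝ) = w / 4 := by
    simp only [sub_zero, nnnorm_one, NNReal.coe_mul, NNReal.coe_natCast, NNReal.coe_pow,
      NNReal.coe_div, NNReal.coe_one, NNReal.coe_ofNat]
    ring
  refine ofReal_one_sub_le_measure (measurableSet_lt measurable_const hS.abs).nullMeasurableSet ?_
  calc _ ≤ _ := measureReal_mono hsub
    _ ≤ _ := (hasSubgaussianMGF_windowStatistic hindep (fun i hi ↦ (hmeas i hi).aemeasurable)
          hrange).measureReal_abs_ge_le (hε.trans' (by positivity))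
    _ ≤ 1 / T := hproxy ▸ two_mul_exp_neg_sq_div_le_one_div hT1 hw hε

/-- Successful-detection lemma for M-UCB: with `δ ∈ (0,1]`, even window size
`w ≥ (4/δ²)(√log(2KT²) + √log(2T))²`, threshold `b = √((w/2)log(2KT²))`, and a window whose
first half has mean `μ` and second half has mean `μ′` with `|μ′ − μ| ≥ δ`, the detector fires
with probability at least `1 − 1/T`. -/
theorem mucb_successful_detection
    {Ω : Type*} [MeasurableSpace Ω] (P : Measure Ω) [IsProbabilityMeasure P]
    (K T : ℕ) (hK : 0 < K) (hT : 0 < T)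
    (δ : ℝ) (hδ : δ ∈ Set.Ioc (0 : ℝ) 1)
    (w : ℕ) (hweven : Even w)
    (hwlarge : (4 / δ ^ 2) *
      (Real.sqrt (Real.log (2 * K * T ^ 2)) + Real.sqrt (Real.log (2 * T))) ^ 2 ≤ (w : ℝ))
    (b : ℝ) (hb : b = Real.sqrt (((w : ℝ) / 2) * Real.log (2 * K * T ^ 2)))
    (μ μ' : ℝ) (hμ : μ ∈ Set.Icc (0 : ℝ) 1) (hμ' : μ' ∈ Set.Icc (0 : ℝ) 1)
    (hgap : δ ≤ |μ' - μ|)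
    (X : ℕ → Ω → ℝ)
    (hmeas : ∀ i ∈ Finset.Icc 1 w, Measurable (X i))
    (hrange : ∀ i ∈ Finset.Icc 1 w, ∀ᵐ ω ∂P, X i ω ∈ Set.Icc (0 : ℝ) 1)
    (hmean1 : ∀ i ∈ Finset.Icc 1 (w / 2), ∫ ω, X i ω ∂P = μ)
    (hmean2 : ∀ i ∈ Finset.Icc (w / 2 + 1) w, ∫ ω, X i ω ∂P = μ')
    (hindep : iIndepFun
      (fun i : {x // x ∈ Finset.Icc 1 w} => X i.1) P) :
    ENNReal.ofReal (1 - 1 / (T : ℝ))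
      ≤ P {ω | b < |(∑ ℓ ∈ Finset.Icc (w / 2 + 1) w, X ℓ ω)
          - ∑ ℓ ∈ Finset.Icc 1 (w / 2), X ℓ ω|} :=
  mucb_successful_detection_general P K T hT δ hδ w hweven hwlarge b hb μ μ' hgap X hmeas hrange
    hmean1 hmean2 hindep
end

section
/- Let T ≥ 1 be a real number and Δ ∈ (0,1]. Let X₁, …, X_n and Y₁, …, Y_m be random variables taking values in [0,1], all n + m of them mutually independent, such that each X_ℓ has mean μ and each Y_ℓ has mean μ*, where μ* − μ ≥ Δ. If n ≥ 4·log(T)/Δ² and m ≥ 4·log(T)/Δ², then P( (1/n)·Σ_{ℓ=1}^{n} X_ℓ ≥ (1/m)·Σ_{ℓ=1}^{m} Y_ℓ ) ≤ 2/T². -/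
/-!
If the empirical mean of the `X`'s is at least that of the `Y`'s, then, since the means differ
by at least `Δ`, either `∑ Xᵢ` exceeds its expectation by `nΔ/2` or `∑ Yⱼ` falls short of its
expectation by `mΔ/2`. By Hoeffding's inequality each event has probability at most
`exp (-kΔ²/2) ≤ exp (-2 log T) = T⁻²`, where `k ∈ {n, m}` and `k ≥ 4 log T / Δ²`.
-/

open MeasureTheory ProbabilityTheory Real

section Hoeffding

variable {Ω : Type*} [MeasurableSpace Ω] {P : Measure Ω} [IsProbabilityMeasure P]
  {ι : Type*} {X : ι → Ω → ℝ} {a b : ℝ}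

theorem measureReal_sum_sub_integral_ge_le (hindep : iIndepFun X P)
    (hmeas : ∀ i, AEMeasurable (X i) P) (hrange : ∀ i, ∀ᵐ ω ∂P, X i ω ∈ Set.Icc a b)
    (s : Finset ι) {ε : ℝ} (hε : 0 ≤ ε) :
    P.real {ω | ε ≤ ∑ i ∈ s, (X i ω - P[X i])} ≤ exp (-2 * ε ^ 2 / (s.card * (b - a) ^ 2)) := by
  have hindep' : iIndepFun (fun i ω ↦ X i ω - P[X i]) P :=
    (hindep.comp (fun i (x : ℝ) ↦ x - P[X i]) fun i ↦ measurable_id.sub_const _ :)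
  calc _ ≤ exp (-ε ^ 2 / (2 * ∑ _i ∈ s, ((‖b - a‖₊ / 2) ^ 2 : NNReal))) :=
        HasSubgaussianMGF.measure_sum_ge_le_of_iIndepFun hindep'
          (fun i _ ↦ hasSubgaussianMGF_of_mem_Icc (hmeas i) (hrange i)) hε
    _ = _ := by
        congr 1
        push_cast
        rw [Finset.sum_const, nsmul_eq_mul, Real.norm_eq_abs, div_pow, sq_abs,
          show (2 : ℝ) * (s.card * ((b - a) ^ 2 / 2 ^ 2)) = s.card * (b - a) ^ 2 / 2 by ring,
          div_div_eq_mul_div]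
        ring

theorem measureReal_sum_sub_integral_le_le (hindep : iIndepFun X P)
    (hmeas : ∀ i, AEMeasurable (X i) P) (hrange : ∀ i, ∀ᵐ ω ∂P, X i ω ∈ Set.Icc a b)
    (s : Finset ι) {ε : ℝ} (hε : 0 ≤ ε) :
    P.real {ω | ∑ i ∈ s, (X i ω - P[X i]) ≤ -ε} ≤ exp (-2 * ε ^ 2 / (s.card * (b - a) ^ 2)) := by
  have hneg := measureReal_sum_sub_integral_ge_le (X := fun i ω ↦ -X i ω) (a := -b) (b := -a)
    (hindep.comp (fun _ x ↦ -x) fun _ ↦ measurable_neg) (fun i ↦ (hmeas i).neg)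
    (fun i ↦ by filter_upwards [hrange i] with ω h using ⟨neg_le_neg h.2, neg_le_neg h.1⟩) s hε
  convert hneg using 3
  · ext ω
    simp only [integral_neg, sub_neg_eq_add, Finset.sum_add_distrib,
      Finset.sum_sub_distrib, Finset.sum_neg_distrib]
    constructor <;> intro h <;> linarith
  · ring

end Hoeffding

theorem half_gap_le_sub_or_sub_le_neg_half_gap {n m : ℕ} (hn : 0 < n) (hm : 0 < m)
    {x y μ ν Δ : ℝ} (hgap : Δ ≤ ν - μ) (h : 1 / (m : ℝ) * y ≤ 1 / (n : ℝ) * x) :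
    n * Δ / 2 ≤ x - n * μ ∨ y - m * ν ≤ -(m * Δ / 2) := by
  by_contra! hc
  have hx : x / n < μ + Δ / 2 := by rw [div_lt_iff₀ (by positivity)]; linarith
  have hy : ν - Δ / 2 < y / m := by rw [lt_div_iff₀ (by positivity)]; linarith
  rw [one_div_mul_eq_div, one_div_mul_eq_div] at h
  linarith

theorem exp_neg_two_mul_half_sq_div_le_inv_sq {T Δ k : ℝ} (hT : 0 < T) (hk : 0 < k)
    (h : 4 * log T ≤ k * Δ ^ 2) : exp (-2 * (k * Δ / 2) ^ 2 / k) ≤ 1 / T ^ 2 := by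
  have hexponent : -2 * (k * Δ / 2) ^ 2 / k = -(k * Δ ^ 2 / 2) := by field_simp
  rw [one_div, ← exp_log (pow_pos hT 2), ← exp_neg, exp_le_exp, log_pow, hexponent]
  push_cast
  linarith

/-- Probabilistic core of the skipping-mechanism lemma: if `X₁, …, X_n` have mean `μ`,
`Y₁, …, Y_m` have mean `μ*` with `μ* − μ ≥ Δ`, all `n + m` variables are `[0,1]`-valued and
mutually independent, and `n, m ≥ 4·log(T)/Δ²`, then the probability that the empirical mean
of the `X`'s is at least that of the `Y`'s is at most `2/T²`. -/
theorem skipping_mechanism_error_bound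
    {Ω : Type*} [MeasurableSpace Ω] (P : Measure Ω) [IsProbabilityMeasure P]
    (T : ℝ) (hT : 1 ≤ T) (Δ : ℝ) (hΔ : Δ ∈ Set.Ioc (0 : ℝ) 1)
    (n m : ℕ) (μ μstar : ℝ)
    (X : Fin n → Ω → ℝ) (Y : Fin m → Ω → ℝ)
    (hmeasX : ∀ i, Measurable (X i)) (hmeasY : ∀ j, Measurable (Y j))
    (hrangeX : ∀ i, ∀ᵐ ω ∂P, X i ω ∈ Set.Icc (0 : ℝ) 1)
    (hrangeY : ∀ j, ∀ᵐ ω ∂P, Y j ω ∈ Set.Icc (0 : ℝ) 1)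
    (hmeanX : ∀ i, ∫ ω, X i ω ∂P = μ)
    (hmeanY : ∀ j, ∫ ω, Y j ω ∂P = μstar)
    (hgap : Δ ≤ μstar - μ)
    (hindep : iIndepFun (Sum.elim X Y) P)
    (hn : 4 * Real.log T / Δ ^ 2 ≤ (n : ℝ))
    (hm : 4 * Real.log T / Δ ^ 2 ≤ (m : ℝ)) :
    P {ω | (1 / (m : ℝ)) * ∑ j, Y j ω ≤ (1 / (n : ℝ)) * ∑ i, X i ω}
      ≤ ENNReal.ofReal (2 / T ^ 2) := by
  obtain ⟨hΔ, -⟩ := hΔ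
  rcases hT.eq_or_lt with rfl | hT
  · exact prob_le_one.trans (by norm_num)
  have hlogT := log_pos hT
  have hnΔ : 4 * log T ≤ n * Δ ^ 2 := (div_le_iff₀ (by positivity)).1 hn
  have hmΔ : 4 * log T ≤ m * Δ ^ 2 := (div_le_iff₀ (by positivity)).1 hm
  have hn0 : (0 : ℝ) < n := by nlinarith
  have hm0 : (0 : ℝ) < m := by nlinarith
  set B := {ω | n * Δ / 2 ≤ ∑ i, (X i ω - P[X i])}
  set C := {ω | ∑ j, (Y j ω - P[Y j]) ≤ -(m * Δ / 2)}
  have hB : P.real B ≤ 1 / T ^ 2 := by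
    refine (measureReal_sum_sub_integral_ge_le (hindep.precomp Sum.inl_injective)
      (fun i ↦ (hmeasX i).aemeasurable) hrangeX Finset.univ (by positivity)).trans ?_
    simpa using exp_neg_two_mul_half_sq_div_le_inv_sq (by positivity) hn0 hnΔ
  have hC : P.real C ≤ 1 / T ^ 2 := by
    refine (measureReal_sum_sub_integral_le_le (hindep.precomp Sum.inr_injective)
      (fun j ↦ (hmeasY j).aemeasurable) hrangeY Finset.univ (by positivity)).trans ?_
    simpa using exp_neg_two_mul_half_sq_div_le_inv_sq (by positivity) hm0 hmΔ
  have hsub : {ω | (1 / (m : ℝ)) * ∑ j, Y j ω ≤ (1 / (n : ℝ)) * ∑ i, X i ω} ⊆ B ∪ C := by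
    intro ω hω
    simpa [B, C, hmeanX, hmeanY, Finset.sum_sub_distrib] using
      half_gap_le_sub_or_sub_le_neg_half_gap (by exact_mod_cast hn0) (by exact_mod_cast hm0)
        hgap hω
  rw [ENNReal.le_ofReal_iff_toReal_le (measure_ne_top _ _) (by positivity)]
  calc P.real _ ≤ P.real (B ∪ C) := measureReal_mono hsub
    _ ≤ P.real B + P.real C := measureReal_union_le B C
    _ ≤ 1 / T ^ 2 + 1 / T ^ 2 := add_le_add hB hC
    _ = 2 / T ^ 2 := by ring
end
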